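/- Let (V_{i,j}) be a point of SpR_{2n} such that V_{i,j} ∩ span(w_{j+1},…,w_{2n}) = 0 for all index pairs (i,j). Then for every index pair (i,j) with i < j one has V_{i,j} = (pr_j ∘ pr_{j−1} ∘ ⋯ ∘ pr_{i+1})(V_{i,i}). In particular, the forgetful map (V_{i,j}) ↦ (V_{1,1},…,V_{n,n}) is injective on the set of points of SpR_{2n} satisfying this condition. -/

import Mathlib

noncomputable section

/-- The ambient 2n-dimensional complex vector space `W = ℂ^{2n}`. -/
abbrev Wsp (n : ℕ) := Fin (2*n) → ℂ

/-- The basis vector `w_k` (1-based index `k ∈ {1,…,2n}`). -/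
def wvec (n k : ℕ) : Wsp n := fun i => if (i : ℕ) + 1 = k then 1 else 0

/-- The standard symplectic form: `⟨w_i, w_{2n+1-i}⟩ = 1` for `1 ≤ i ≤ n`,
and `⟨w_i, w_j⟩ = 0` for `j ≠ 2n+1-i`. -/
def sform (n : ℕ) (x y : Wsp n) : ℂ :=
  ∑ i : Fin (2*n), (if (i : ℕ) < n then 1 else -1) * x i *
    y ⟨2*n - 1 - (i : ℕ), by have := i.isLt; omega⟩

/-- A subspace is isotropic if the symplectic form vanishes on it. -/
def IsIsotropic (n : ℕ) (U : Submodule ℂ (Wsp n)) : Prop :=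
  ∀ u ∈ U, ∀ v ∈ U, sform n u v = 0

/-- The projection `pr_k` along `w_k` (1-based). -/
def prj (n k : ℕ) : Wsp n →ₗ[ℂ] Wsp n where
  toFun x := fun i => if (i : ℕ) + 1 = k then 0 else x i
  map_add' x y := by funext i; by_cases h : (i : ℕ) + 1 = k <;> simp [h]
  map_smul' c x := by funext i; by_cases h : (i : ℕ) + 1 = k <;> simp [h]

/-- The subspace `W_{i,j} = span(w_1,…,w_i,w_{j+1},…,w_{2n})` (1-based). -/
def WIJ (n i j : ℕ) : Submodule ℂ (Wsp n) :=
  Submodule.span ℂ (wvec n '' {k | (1 ≤ k ∧ k ≤ i) ∨ (j + 1 ≤ k ∧ k ≤ 2*n)})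

/-- Orthogonal complement with respect to the symplectic form. -/
def sperp (n : ℕ) (U : Submodule ℂ (Wsp n)) : Submodule ℂ (Wsp n) where
  carrier := {x | ∀ u ∈ U, sform n x u = 0}
  zero_mem' := by intro u hu; simp [sform]
  add_mem' := by
    intro a b ha hb u hu
    have ha' := ha u hu
    have hb' := hb u hu
    simp only [sform, Pi.add_apply, add_mul, mul_add, Finset.sum_add_distrib] at *
    rw [ha', hb', add_zero]
  smul_mem' := by
    intro c a ha u hu
    have ha' := ha u hu
    simp only [sform, Pi.smul_apply, smul_eq_mul] at *
    calc ∑ i : Fin (2*n), (if (i : ℕ) < n then 1 else -1) * (c * a i) *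
          u ⟨2*n - 1 - (i : ℕ), by have := i.isLt; omega⟩
        = c * ∑ i : Fin (2*n), (if (i : ℕ) < n then 1 else -1) * a i *
          u ⟨2*n - 1 - (i : ℕ), by have := i.isLt; omega⟩ := by
          rw [Finset.mul_sum]; congr 1; funext i; ring
      _ = 0 := by rw [ha', mul_zero]

/-- The points of the Bott–Samelson type resolution `SpR_{2n}`:
collections `(V_{i,j})` for `1 ≤ i ≤ j`, `i+j ≤ 2n`. -/
structure IsSpR (n : ℕ) (V : ℕ → ℕ → Submodule ℂ (Wsp n)) : Prop where
  dim : ∀ i j, 1 ≤ i → i ≤ j → i + j ≤ 2*n → Module.finrank ℂ (V i j) = i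
  sub : ∀ i j, 1 ≤ i → i ≤ j → i + j ≤ 2*n → V i j ≤ WIJ n i j
  mono : ∀ i j, 1 ≤ i → i + 1 ≤ j → (i + 1) + j ≤ 2*n → V i j ≤ V (i+1) j
  proj : ∀ i j, 1 ≤ i → i ≤ j → i + (j+1) ≤ 2*n →
    Submodule.map (prj n (j+1)) (V i j) ≤ V i (j+1)
  isot : ∀ i, 1 ≤ i → i ≤ n → IsIsotropic n (V i (2*n - i))

/-- A point of `SpR_{2n}` lies in the divisor `Z_{i,j}` if
`V_{i,j} = V_{i-1,j+1} + ℂ w_{j+1}` (with `V_0 = 0`). -/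
def InZ (n : ℕ) (V : ℕ → ℕ → Submodule ℂ (Wsp n)) (i j : ℕ) : Prop :=
  V i j = (if i = 1 then ⊥ else V (i-1) (j+1)) ⊔ Submodule.span ℂ {wvec n (j+1)}

/-- The composite projection `pr_b ∘ pr_{b-1} ∘ ⋯ ∘ pr_a` (identity if `b < a`). -/
def prChainRev (n a b : ℕ) : Wsp n →ₗ[ℂ] Wsp n :=
  (((List.range' a (b + 1 - a)).map (prj n)).foldl (fun f g => g ∘ₗ f) LinearMap.id)


theorem Submodule.map_eq_of_disjoint_ker {K V W : Type*} [DivisionRing K] [AddCommGroup V]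
    [Module K V] [AddCommGroup W] [Module K W] {f : V →ₗ[K] W} {U : Submodule K V}
    {U' : Submodule K W} [FiniteDimensional K U'] (hker : Disjoint U (LinearMap.ker f))
    (hle : U.map f ≤ U') (hdim : Module.finrank K U' = Module.finrank K U) : U.map f = U' := by
  refine Submodule.eq_of_le_of_finrank_eq hle ?_
  rw [← LinearMap.range_domRestrict,
    LinearMap.finrank_range_of_inj (LinearMap.injective_domRestrict_iff.mpr hker), hdim]

lemma prChainRev_self (n a : ℕ) : prChainRev n a a = prj n a := by
  simp [prChainRev, show a + 1 - a = 1 by omega]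

lemma prChainRev_succ (n a b : ℕ) (h : a ≤ b + 1) :
    prChainRev n a (b + 1) = prj n (b + 1) ∘ₗ prChainRev n a b := by
  have hlen : b + 1 + 1 - a = (b + 1 - a) + 1 := by omega
  have hlast : a + (b + 1 - a) = b + 1 := by omega
  simp [prChainRev, hlen, List.range'_concat, hlast]

lemma wvec_mem_WIJ (n i j k : ℕ) (hjk : j < k) (hk : k ≤ 2 * n) : wvec n k ∈ WIJ n i j :=
  Submodule.subset_span ⟨k, Or.inr ⟨hjk, hk⟩, rfl⟩

lemma ker_prj_le_span_wvec (n j : ℕ) (hj : j < 2 * n) :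
    LinearMap.ker (prj n (j + 1)) ≤ ℂ ∙ wvec n (j + 1) := by
  intro x hx
  refine Submodule.mem_span_singleton.mpr ⟨x ⟨j, hj⟩, funext fun k => ?_⟩
  have hxk := congrFun (LinearMap.mem_ker.mp hx) k
  by_cases hk : (k : ℕ) = j
  · obtain rfl : k = ⟨j, hj⟩ := Fin.ext hk
    simp [wvec]
  · simp_all [prj, wvec]

lemma ker_prj_le_WIJ (n j : ℕ) (hj : j < 2 * n) : LinearMap.ker (prj n (j + 1)) ≤ WIJ n 0 j :=
  (ker_prj_le_span_wvec n j hj).trans <|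
    (Submodule.span_singleton_le_iff_mem _ _).mpr (wvec_mem_WIJ n 0 j (j + 1) (by omega) hj)

namespace IsSpR

variable {n : ℕ} {V : ℕ → ℕ → Submodule ℂ (Wsp n)}

/-- On the open cell `pr_{j+1}` is injective on `V_{i,j}`, so the inclusion
`pr_{j+1}(V_{i,j}) ⊆ V_{i,j+1}` of `i`-dimensional spaces is an equality. -/
lemma eq_map_prj (hV : IsSpR n V) {i j : ℕ} (hcell : V i j ⊓ WIJ n 0 j = ⊥)
    (hi : 1 ≤ i) (hij : i ≤ j) (hsum : i + (j + 1) ≤ 2 * n) :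
    V i (j + 1) = (V i j).map (prj n (j + 1)) := by
  have hker : Disjoint (V i j) (LinearMap.ker (prj n (j + 1))) :=
    (disjoint_iff.mpr hcell).mono_right (ker_prj_le_WIJ n j (by omega))
  refine (Submodule.map_eq_of_disjoint_ker hker (hV.proj i j hi hij hsum) ?_).symm
  rw [hV.dim i (j + 1) hi (by omega) hsum, hV.dim i j hi hij (by omega)]

lemma eq_map_prChainRev (hV : IsSpR n V)
    (hcell : ∀ i j, 1 ≤ i → i ≤ j → i + j ≤ 2*n → V i j ⊓ WIJ n 0 j = ⊥)
    {i j : ℕ} (hi : 1 ≤ i) (hij : i < j) (hsum : i + j ≤ 2 * n) :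
    V i j = (V i i).map (prChainRev n (i + 1) j) := by
  induction j, hij using Nat.le_induction with
  | base => rw [hV.eq_map_prj (hcell i i hi le_rfl (by omega)) hi le_rfl hsum, prChainRev_self]
  | succ j hij ih =>
    rw [hV.eq_map_prj (hcell i j hi (by omega) (by omega)) hi (by omega) hsum, ih (by omega),
      prChainRev_succ n (i + 1) j (by omega), Submodule.map_comp]

end IsSpR

theorem statement6_general (n : ℕ)
    (V : ℕ → ℕ → Submodule ℂ (Wsp n)) (hV : IsSpR n V)
    (hcell : ∀ i j, 1 ≤ i → i ≤ j → i + j ≤ 2*n → V i j ⊓ WIJ n 0 j = ⊥) :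
    (∀ i j, 1 ≤ i → i < j → i + j ≤ 2*n →
      V i j = Submodule.map (prChainRev n (i + 1) j) (V i i)) ∧
    (∀ V' : ℕ → ℕ → Submodule ℂ (Wsp n), IsSpR n V' →
      (∀ i j, 1 ≤ i → i ≤ j → i + j ≤ 2*n → V' i j ⊓ WIJ n 0 j = ⊥) →
      (∀ i, 1 ≤ i → i ≤ n → V i i = V' i i) →
      ∀ i j, 1 ≤ i → i ≤ j → i + j ≤ 2*n → V i j = V' i j) := by
  refine ⟨fun i j hi hij hsum => hV.eq_map_prChainRev hcell hi hij hsum, ?_⟩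
  intro V' hV' hcell' hdiag i j hi hij hsum
  rcases hij.eq_or_lt with rfl | hlt
  · exact hdiag i hi (by omega)
  · rw [hV.eq_map_prChainRev hcell hi hlt hsum, hV'.eq_map_prChainRev hcell' hi hlt hsum,
      hdiag i hi (by omega)]

theorem statement6 (n : ℕ) (hn : 1 ≤ n)
    (V : ℕ → ℕ → Submodule ℂ (Wsp n)) (hV : IsSpR n V)
    (hcell : ∀ i j, 1 ≤ i → i ≤ j → i + j ≤ 2*n → V i j ⊓ WIJ n 0 j = ⊥) :
    (∀ i j, 1 ≤ i → i < j → i + j ≤ 2*n →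
      V i j = Submodule.map (prChainRev n (i + 1) j) (V i i)) ∧
    (∀ V' : ℕ → ℕ → Submodule ℂ (Wsp n), IsSpR n V' →
      (∀ i j, 1 ≤ i → i ≤ j → i + j ≤ 2*n → V' i j ⊓ WIJ n 0 j = ⊥) →
      (∀ i, 1 ≤ i → i ≤ n → V i i = V' i i) →
      ∀ i j, 1 ≤ i → i ≤ j → i + j ≤ 2*n → V i j = V' i j) :=
  statement6_general n V hV hcell

end
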